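/- arXiv:nlin/0309023 — 3 statements merged into one kernel-verified Lean document; each statement's English description precedes it below -/
import Mathlib

section
/- The function W = exp(−2ω)u is a symmetry (shadow) of the CDIS equation: with ω satisfying ω_x = u² and ω_t = 2uu₂ + 6u³u₁ + u⁶ − u₁², one has D_t(W) − F_*(W) = 0, where F = u₃ + 3u²u₂ + 9uu₁² + 3u⁴u₁. -/
/-- Partial derivative in the first (space) variable. -/
noncomputable def dx (u : ℝ → ℝ → ℝ) : ℝ → ℝ → ℝ := fun x t => deriv (fun y => u y t) x

/-- Partial derivative in the second (time) variable. -/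
noncomputable def dt (u : ℝ → ℝ → ℝ) : ℝ → ℝ → ℝ := fun x t => deriv (fun s => u x s) t

/-- Right-hand side F of the CDIS equation u_t = F. -/
noncomputable def Fcdis (u : ℝ → ℝ → ℝ) : ℝ → ℝ → ℝ := fun x t =>
  dx (dx (dx u)) x t + 3 * (u x t) ^ 2 * dx (dx u) x t
    + 9 * u x t * (dx u x t) ^ 2 + 3 * (u x t) ^ 4 * dx u x t

/-- The linearization F_* of F applied to G along u (D = ∂_x along actual functions). -/
noncomputable def FcdisStar (u G : ℝ → ℝ → ℝ) : ℝ → ℝ → ℝ := fun x t =>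
  (6 * u x t * dx (dx u) x t + 9 * (dx u x t) ^ 2 + 12 * (u x t) ^ 3 * dx u x t) * G x t
    + (18 * u x t * dx u x t + 3 * (u x t) ^ 4) * dx G x t
    + 3 * (u x t) ^ 2 * dx (dx G) x t
    + dx (dx (dx G)) x t

lemma slice_x_hasDerivAt (f : ℝ → ℝ → ℝ) (hf : ContDiff ℝ (⊤ : ℕ∞) (Function.uncurry f)) (x t : ℝ) :
    HasDerivAt (fun y => f y t) (dx f x t) x := by
  have hd : DifferentiableAt ℝ (fun y => f y t) x := by
    have h := DifferentiableAt.comp (g := Function.uncurry f) x (hf.differentiable (by simp) (x, t))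
      ((differentiableAt_id (𝕜 := ℝ) (x := x)).prodMk (differentiableAt_const t))
    exact h
  simpa [dx] using hd.hasDerivAt

lemma slice_t_hasDerivAt (f : ℝ → ℝ → ℝ) (hf : ContDiff ℝ (⊤ : ℕ∞) (Function.uncurry f)) (x t : ℝ) :
    HasDerivAt (fun s => f x s) (dt f x t) t := by
  have hd : DifferentiableAt ℝ (fun s => f x s) t := by
    have h := DifferentiableAt.comp (g := Function.uncurry f) t (hf.differentiable (by simp) (x, t))
      ((differentiableAt_const x).prodMk differentiableAt_id)
    exact h
  simpa [dt] using hd.hasDerivAt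

lemma contDiff_dx (f : ℝ → ℝ → ℝ) (hf : ContDiff ℝ (⊤ : ℕ∞) (Function.uncurry f)) :
    ContDiff ℝ (⊤ : ℕ∞) (Function.uncurry (dx f)) := by
  have h : Function.uncurry (dx f) = fun p : ℝ × ℝ => fderiv ℝ (Function.uncurry f) p (1, 0) := by
    funext p
    obtain ⟨x, t⟩ := p
    have h1 : HasDerivAt (fun y : ℝ => (y, t)) ((1 : ℝ), (0 : ℝ)) x :=
      (hasDerivAt_id x).prodMk (hasDerivAt_const x t)
    have h2 := ((hf.differentiable (by simp) (x, t)).hasFDerivAt).comp_hasDerivAt x h1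
    exact h2.deriv
  rw [h]
  exact (hf.fderiv_right (by simp)).clm_apply contDiff_const


/-- W = exp(−2ω)u is a (nonlocal, shadow) symmetry of the CDIS equation:
with ω_x = u² and ω_t = 2uu₂ + 6u³u₁ + u⁶ − u₁², one has D_t(W) − F_*(W) = 0. -/
theorem cdis_symmetry_W (u ω : ℝ → ℝ → ℝ)
    (hu : ContDiff ℝ (⊤ : ℕ∞) (Function.uncurry u))
    (hω : ContDiff ℝ (⊤ : ℕ∞) (Function.uncurry ω))
    (hcdis : ∀ x t, dt u x t = Fcdis u x t)
    (hωx : ∀ x t, dx ω x t = (u x t) ^ 2)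
    (hωt : ∀ x t, dt ω x t = 2 * u x t * dx (dx u) x t + 6 * (u x t) ^ 3 * dx u x t
        + (u x t) ^ 6 - (dx u x t) ^ 2) :
    ∀ x t,
      dt (fun x t => Real.exp (-2 * ω x t) * u x t) x t
        - FcdisStar u (fun x t => Real.exp (-2 * ω x t) * u x t) x t = 0 := by
  set G : ℝ → ℝ → ℝ := fun x t => Real.exp (-2 * ω x t) * u x t with hG
  have hu1 := contDiff_dx u hu
  have hu2 := contDiff_dx (dx u) hu1
  -- first x-derivative of G
  have h1 : ∀ x t, dx G x t =
      Real.exp (-2 * ω x t) * (dx u x t - 2 * (u x t) ^ 3) := by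
    intro x t
    have hω' := slice_x_hasDerivAt ω hω x t
    have hu' := slice_x_hasDerivAt u hu x t
    have H : HasDerivAt (fun y => Real.exp (-2 * ω y t) * u y t)
        ((Real.exp (-2 * ω x t) * (-2 * dx ω x t)) * u x t
          + Real.exp (-2 * ω x t) * dx u x t) x :=
      ((hω'.const_mul (-2)).exp).mul hu'
    have := H.deriv
    show deriv (fun y => Real.exp (-2 * ω y t) * u y t) x = _
    rw [this, hωx]; ring
  -- second x-derivative
  have h2 : ∀ x t, dx (dx G) x t =
      Real.exp (-2 * ω x t) * (dx (dx u) x t - 8 * (u x t) ^ 2 * dx u x t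
        + 4 * (u x t) ^ 5) := by
    intro x t
    have hfun : (fun y => dx G y t)
        = fun y => Real.exp (-2 * ω y t) * (dx u y t - 2 * (u y t) ^ 3) :=
      funext fun y => h1 y t
    have hω' := slice_x_hasDerivAt ω hω x t
    have hu' := slice_x_hasDerivAt u hu x t
    have hu1' := slice_x_hasDerivAt (dx u) hu1 x t
    have H : HasDerivAt (fun y => Real.exp (-2 * ω y t) * (dx u y t - 2 * (u y t) ^ 3))
        ((Real.exp (-2 * ω x t) * (-2 * dx ω x t)) * (dx u x t - 2 * (u x t) ^ 3)
          + Real.exp (-2 * ω x t) * (dx (dx u) x t - 2 * (3 * (u x t) ^ 2 * dx u x t))) x := by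
      have hp : HasDerivAt (fun y => (u y t) ^ 3) (3 * (u x t) ^ 2 * dx u x t) x := by
        simpa using hu'.fun_pow 3
      exact ((hω'.const_mul (-2)).exp).mul (hu1'.sub (hp.const_mul 2))
    show deriv (fun y => dx G y t) x = _
    rw [hfun, H.deriv, hωx]; ring
  -- third x-derivative
  have h3 : ∀ x t, dx (dx (dx G)) x t =
      Real.exp (-2 * ω x t) * (dx (dx (dx u)) x t - 10 * (u x t) ^ 2 * dx (dx u) x t
        - 16 * u x t * (dx u x t) ^ 2 + 36 * (u x t) ^ 4 * dx u x t - 8 * (u x t) ^ 7) := by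
    intro x t
    have hfun : (fun y => dx (dx G) y t)
        = fun y => Real.exp (-2 * ω y t) * (dx (dx u) y t - 8 * (u y t) ^ 2 * dx u y t
            + 4 * (u y t) ^ 5) :=
      funext fun y => h2 y t
    have hω' := slice_x_hasDerivAt ω hω x t
    have hu' := slice_x_hasDerivAt u hu x t
    have hu1' := slice_x_hasDerivAt (dx u) hu1 x t
    have hu2' := slice_x_hasDerivAt (dx (dx u)) hu2 x t
    have hp2 : HasDerivAt (fun y => (u y t) ^ 2) (2 * u x t * dx u x t) x := by
      simpa using hu'.fun_pow 2
    have hp5 : HasDerivAt (fun y => (u y t) ^ 5) (5 * (u x t) ^ 4 * dx u x t) x := by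
      simpa using hu'.fun_pow 5
    have H : HasDerivAt (fun y => Real.exp (-2 * ω y t) * (dx (dx u) y t
          - 8 * (u y t) ^ 2 * dx u y t + 4 * (u y t) ^ 5))
        ((Real.exp (-2 * ω x t) * (-2 * dx ω x t)) * (dx (dx u) x t
            - 8 * (u x t) ^ 2 * dx u x t + 4 * (u x t) ^ 5)
          + Real.exp (-2 * ω x t) * (dx (dx (dx u)) x t
            - ((2 * u x t * dx u x t) * (8 * dx u x t)
               + ((u x t) ^ 2) * (8 * dx (dx u) x t))
            + 4 * (5 * (u x t) ^ 4 * dx u x t))) x := by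
      have hmul : HasDerivAt (fun y => (u y t) ^ 2 * (8 * dx u y t))
          ((2 * u x t * dx u x t) * (8 * dx u x t)
            + ((u x t) ^ 2) * (8 * dx (dx u) x t)) x := hp2.mul (hu1'.const_mul 8)
      have := ((hω'.const_mul (-2)).exp).fun_mul ((hu2'.fun_sub hmul).fun_add (hp5.const_mul 4))
      convert this using 2
      · rfl
      · rfl
      · ring
      · ring
    show deriv (fun y => dx (dx G) y t) x = _
    rw [hfun, H.deriv, hωx]; ring
  -- time derivative
  have h4 : ∀ x t, dt G x t =
      Real.exp (-2 * ω x t) * (dx (dx (dx u)) x t - (u x t) ^ 2 * dx (dx u) x t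
        + 11 * u x t * (dx u x t) ^ 2 - 9 * (u x t) ^ 4 * dx u x t - 2 * (u x t) ^ 7) := by
    intro x t
    have hω' := slice_t_hasDerivAt ω hω x t
    have hu' := slice_t_hasDerivAt u hu x t
    have H : HasDerivAt (fun s => Real.exp (-2 * ω x s) * u x s)
        ((Real.exp (-2 * ω x t) * (-2 * dt ω x t)) * u x t
          + Real.exp (-2 * ω x t) * dt u x t) t :=
      ((hω'.const_mul (-2)).exp).mul hu'
    show deriv (fun s => Real.exp (-2 * ω x s) * u x s) t = _
    rw [H.deriv, hωt, hcdis]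
    simp only [Fcdis]
    ring
  intro x t
  rw [h4 x t]
  simp only [FcdisStar]
  rw [h1 x t, h2 x t, h3 x t, hG]
  ring
end

section
/- With G_{m,j}(t) = Σ_{i=0}^{m} ((2k+1)t)^i m!/(i!(m−i)!) τ_{m−i,j+ik} in the Lie algebra with bracket [τ_{m,j}, τ_{m',j'}] = ((2j'+1)m − (2j+1)m')τ_{m+m'−1,j+j'}, the elements G_{m,j}(t) satisfy, for each fixed t, the same commutation relations: [G_{m,j}(t), G_{m',j'}(t)] = ((2j'+1)m − (2j+1)m') G_{m+m'−1,j+j'}(t). -/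
/-- The basis element τ_{m,j} of the free ℝ-vector space on symbols τ_{m,j}, m, j ∈ ℕ. -/
noncomputable def tau (m j : ℕ) : (ℕ × ℕ) →₀ ℝ := Finsupp.single (m, j) 1

/-- The bilinear bracket determined by the structure constants
[τ_{m,j}, τ_{m',j'}] = ((2j'+1)m − (2j+1)m') τ_{m+m'−1, j+j'}
(the coefficient vanishes when m = m' = 0, so no τ_{−1,·} is needed;
the natural subtraction m+m'−1 is harmless there). -/
noncomputable def br (f g : (ℕ × ℕ) →₀ ℝ) : (ℕ × ℕ) →₀ ℝ :=
  f.sum fun p a => g.sum fun q b =>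
    (a * b * ((2 * (q.2 : ℝ) + 1) * (p.1 : ℝ) - (2 * (p.2 : ℝ) + 1) * (q.1 : ℝ))) •
      Finsupp.single (p.1 + q.1 - 1, p.2 + q.2) (1 : ℝ)

/-- The elements G_{m,j}(t) = Σ_{i=0}^{m} ((2k+1)t)^i m!/(i!(m−i)!) τ_{m−i, j+ik}. -/
noncomputable def Gelt (k : ℕ) (m j : ℕ) (t : ℝ) : (ℕ × ℕ) →₀ ℝ :=
  ∑ i ∈ Finset.range (m + 1),
    (((2 * (k : ℝ) + 1) * t) ^ i *
      ((m.factorial : ℝ) / ((i.factorial : ℝ) * ((m - i).factorial : ℝ)))) • tau (m - i) (j + i * k)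

section Aux

open Finset

lemma aux_choose_sub_mul (m i : ℕ) : (m - i) * m.choose i = m * (m-1).choose i := by
  cases m with
  | zero => simp
  | succ a => simpa [Nat.succ_sub_one, mul_comm] using (Nat.choose_mul_succ_eq a i).symm

lemma aux_choose_succ_mul (m i : ℕ) : (i+1) * m.choose (i+1) = m * (m-1).choose i := by
  cases m with
  | zero => simp
  | succ a => simpa [Nat.succ_sub_one, mul_comm] using (Nat.add_one_mul_choose_eq a i).symm

lemma aux_vander (a b n : ℕ) :
    ∑ i ∈ range (n+1), (a.choose i : ℝ) * (b.choose (n-i) : ℝ) = ((a+b).choose n : ℝ) := by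
  have := Nat.add_choose_eq a b n
  rw [Finset.Nat.sum_antidiagonal_eq_sum_range_succ_mk] at this
  exact_mod_cast congrArg (Nat.cast : ℕ → ℝ) this.symm

lemma aux_r1 (m i : ℕ) : ((m - i : ℕ) : ℝ) * (m.choose i : ℝ) = (m:ℝ) * ((m-1).choose i : ℝ) := by
  exact_mod_cast congrArg (Nat.cast : ℕ → ℝ) (aux_choose_sub_mul m i)

lemma aux_r2 (m i : ℕ) : ((i:ℝ)+1) * (m.choose (i+1) : ℝ) = (m:ℝ) * ((m-1).choose i : ℝ) := by
  exact_mod_cast congrArg (Nat.cast : ℕ → ℝ) (aux_choose_succ_mul m i)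

lemma aux_star (k j j' m m' n : ℕ) :
    ∑ i ∈ range (n+1), (m.choose i : ℝ) * (m'.choose (n-i) : ℝ) *
      ((2*(j':ℝ) + 2*((n-i : ℕ):ℝ)*(k:ℝ) + 1) * ((m - i : ℕ):ℝ)
        - (2*(j:ℝ) + 2*(i:ℝ)*(k:ℝ) + 1) * ((m' - (n-i) : ℕ):ℝ))
    = ((2*(j':ℝ)+1)*(m:ℝ) - (2*(j:ℝ)+1)*(m':ℝ)) * (((m+m'-1).choose n : ℕ):ℝ) := by
  set K : ℝ := (k:ℝ)
  have expand : ∀ i ∈ range (n+1),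
      (m.choose i : ℝ) * (m'.choose (n-i) : ℝ) *
        ((2*(j':ℝ) + 2*((n-i : ℕ):ℝ)*K + 1) * ((m - i : ℕ):ℝ)
          - (2*(j:ℝ) + 2*(i:ℝ)*K + 1) * ((m' - (n-i) : ℕ):ℝ))
      = (2*(j':ℝ)+1) * ((m:ℝ) * ((m-1).choose i : ℝ) * (m'.choose (n-i) : ℝ))
        - (2*(j:ℝ)+1) * ((m.choose i : ℝ) * ((m':ℝ) * ((m'-1).choose (n-i) : ℝ)))
        + 2*K * (((m:ℝ) * ((m-1).choose i : ℝ)) * (((n-i:ℕ):ℝ) * (m'.choose (n-i) : ℝ)))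
        - 2*K * (((i:ℝ) * (m.choose i : ℝ)) * ((m':ℝ) * ((m'-1).choose (n-i) : ℝ))) := by
    intro i _
    have h1 := aux_r1 m i
    have h2 := aux_r1 m' (n-i)
    linear_combination ((2*(j':ℝ) + 2*((n-i:ℕ):ℝ)*K + 1) * (m'.choose (n-i) : ℝ)) * h1
      - ((2*(j:ℝ) + 2*(i:ℝ)*K + 1) * (m.choose i : ℝ)) * h2
  rw [Finset.sum_congr rfl expand]
  rw [Finset.sum_sub_distrib, Finset.sum_add_distrib, Finset.sum_sub_distrib]
  simp only [← Finset.mul_sum]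
  have hC :
      ∑ i ∈ range (n+1), ((m:ℝ) * ((m-1).choose i : ℝ)) * (((n-i:ℕ):ℝ) * (m'.choose (n-i) : ℝ))
      = ∑ i ∈ range (n+1), ((i:ℝ) * (m.choose i : ℝ)) * ((m':ℝ) * ((m'-1).choose (n-i) : ℝ)) := by
    rw [Finset.sum_range_succ, Finset.sum_range_succ']
    simp only [Nat.sub_self, Nat.cast_zero, zero_mul, mul_zero, add_zero, zero_add]
    apply Finset.sum_congr rfl
    intro i hi
    have hi' : i < n := Finset.mem_range.mp hi
    have e1 : n - i = (n - 1 - i) + 1 := by omega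
    have e2 : n - (i+1) = n - 1 - i := by omega
    rw [e1, e2]
    have h1 := aux_r2 m' (n-1-i)
    have h2 := aux_r2 m i
    push_cast
    linear_combination ((m:ℝ) * ((m-1).choose i : ℝ)) * h1
      - ((m':ℝ) * ((m'-1).choose (n-1-i) : ℝ)) * h2
  have hA : ∑ i ∈ range (n+1), (m:ℝ) * ((m-1).choose i : ℝ) * (m'.choose (n-i) : ℝ)
      = (m:ℝ) * (((m+m'-1).choose n : ℕ):ℝ) := by
    simp only [mul_assoc]
    rw [← Finset.mul_sum, aux_vander]
    rcases Nat.eq_zero_or_pos m with h | h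
    · simp [h]
    · have : m - 1 + m' = m + m' - 1 := by omega
      rw [this]
  have hB : ∑ i ∈ range (n+1), (m.choose i : ℝ) * ((m':ℝ) * ((m'-1).choose (n-i) : ℝ))
      = (m':ℝ) * (((m+m'-1).choose n : ℕ):ℝ) := by
    have : ∀ i ∈ range (n+1), (m.choose i : ℝ) * ((m':ℝ) * ((m'-1).choose (n-i) : ℝ))
        = (m':ℝ) * ((m.choose i : ℝ) * (((m'-1).choose (n-i) : ℕ):ℝ)) := by
      intro i _; ring
    rw [Finset.sum_congr rfl this, ← Finset.mul_sum, aux_vander]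
    rcases Nat.eq_zero_or_pos m' with h | h
    · simp [h]
    · have : m + (m' - 1) = m + m' - 1 := by omega
      rw [this]
  rw [hC, hA, hB]
  ring

lemma br_single_single (p q : ℕ × ℕ) (a b : ℝ) :
    br (Finsupp.single p a) (Finsupp.single q b) =
      (a * b * ((2 * (q.2 : ℝ) + 1) * (p.1 : ℝ) - (2 * (p.2 : ℝ) + 1) * (q.1 : ℝ))) •
        Finsupp.single (p.1 + q.1 - 1, p.2 + q.2) (1 : ℝ) := by
  unfold br
  rw [Finsupp.sum_single_index, Finsupp.sum_single_index]
  · simp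
  · simp [Finsupp.sum_single_index]

lemma br_sum_left {ι : Type*} (s : Finset ι) (f : ι → ((ℕ × ℕ) →₀ ℝ)) (g : (ℕ × ℕ) →₀ ℝ) :
    br (∑ i ∈ s, f i) g = ∑ i ∈ s, br (f i) g := by
  unfold br
  rw [← Finsupp.sum_finset_sum_index]
  · intro p; simp [Finsupp.sum]
  · intro p a₁ a₂
    rw [← Finsupp.sum_add]
    apply Finsupp.sum_congr
    intro q _
    rw [← add_smul]; ring_nf

lemma br_sum_right {ι : Type*} (f : (ℕ × ℕ) →₀ ℝ) (s : Finset ι) (g : ι → ((ℕ × ℕ) →₀ ℝ)) :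
    br f (∑ i ∈ s, g i) = ∑ i ∈ s, br f (g i) := by
  unfold br
  have : ∀ (p : ℕ × ℕ) (a : ℝ), ((∑ i ∈ s, g i).sum fun q b =>
      (a * b * ((2 * (q.2 : ℝ) + 1) * (p.1 : ℝ) - (2 * (p.2 : ℝ) + 1) * (q.1 : ℝ))) •
        Finsupp.single (p.1 + q.1 - 1, p.2 + q.2) (1 : ℝ))
      = ∑ i ∈ s, ((g i).sum fun q b =>
      (a * b * ((2 * (q.2 : ℝ) + 1) * (p.1 : ℝ) - (2 * (p.2 : ℝ) + 1) * (q.1 : ℝ))) •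
        Finsupp.single (p.1 + q.1 - 1, p.2 + q.2) (1 : ℝ)) := by
    intro p a
    rw [← Finsupp.sum_finset_sum_index]
    · intro q; simp
    · intro q b₁ b₂
      rw [← add_smul]; ring_nf
  simp only [this]
  rw [Finsupp.sum, Finset.sum_comm]
  apply Finset.sum_congr rfl
  intro i _
  rw [Finsupp.sum]

lemma gelt_eq (k m j : ℕ) (t : ℝ) {N : ℕ} (hN : m + 1 ≤ N) :
    Gelt k m j t = ∑ i ∈ range N,
      Finsupp.single (m - i, j + i * k) ((((2 * (k : ℝ) + 1) * t)) ^ i * (m.choose i : ℝ)) := by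
  unfold Gelt tau
  have h1 : ∀ i ∈ Finset.range (m+1),
      (((2 * (k : ℝ) + 1) * t) ^ i *
        ((m.factorial : ℝ) / ((i.factorial : ℝ) * ((m - i).factorial : ℝ)))) •
          Finsupp.single ((m - i, j + i * k)) (1:ℝ)
      = Finsupp.single (m - i, j + i * k)
          ((((2 * (k : ℝ) + 1) * t)) ^ i * (m.choose i : ℝ)) := by
    intro i hi
    have him : i ≤ m := by have := Finset.mem_range.mp hi; omega
    rw [Nat.cast_choose ℝ him, Finsupp.smul_single', mul_one]
  rw [Finset.sum_congr rfl h1]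
  apply Finset.sum_subset (Finset.range_subset_range.mpr hN)
  intro i _ hi
  have him : m < i := by have := Finset.mem_range.not.mp hi; omega
  simp [Nat.choose_eq_zero_of_lt him]

lemma aux_diag {M : Type*} [AddCommMonoid M] (N : ℕ) (F : ℕ → ℕ → M)
    (h0 : ∀ i i', N ≤ i ∨ N ≤ i' → F i i' = 0) :
    ∑ i ∈ range N, ∑ i' ∈ range N, F i i'
      = ∑ n ∈ range (2*N), ∑ i ∈ range (n+1), F i (n-i) := by
  rw [Finset.sum_range_diag_flip]
  have step1 : ∀ a ∈ range (2*N), ∑ b ∈ range (2*N - a), F a b = ∑ b ∈ range (2*N), F a b := by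
    intro a _
    apply Finset.sum_subset (Finset.range_subset_range.mpr (by omega))
    intro b _ hb
    have : 2*N - a ≤ b := by
      have := Finset.mem_range.not.mp hb; omega
    exact h0 a b (by omega)
  rw [Finset.sum_congr rfl step1]
  have h2 : ∀ a ∈ Finset.range N, ∑ b ∈ Finset.range N, F a b = ∑ b ∈ Finset.range (2*N), F a b :=
    fun a _ => Finset.sum_subset (Finset.range_subset_range.mpr (by omega))
      (fun b _ hb => h0 a b (Or.inr (by have := Finset.mem_range.not.mp hb; omega)))
  rw [Finset.sum_congr rfl h2]
  exact Finset.sum_subset (Finset.range_subset_range.mpr (by omega : N ≤ 2*N))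
    (fun a _ ha => Finset.sum_eq_zero fun b _ =>
      h0 a b (Or.inl (by have := Finset.mem_range.not.mp ha; omega)))

end Aux

/-- for each fixed t and k, the elements G_{m,j}(t) obey the same
commutation relations as the τ_{m,j}:
[G_{m,j}(t), G_{m',j'}(t)] = ((2j'+1)m − (2j+1)m') G_{m+m'−1,j+j'}(t). -/
theorem Gelt_commutation (k : ℕ) (t : ℝ) (m j m' j' : ℕ) :
    br (Gelt k m j t) (Gelt k m' j' t) =
      ((2 * (j' : ℝ) + 1) * (m : ℝ) - (2 * (j : ℝ) + 1) * (m' : ℝ)) •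
        Gelt k (m + m' - 1) (j + j') t := by
  classical
  set x : ℝ := (2 * (k : ℝ) + 1) * t with hx
  set c : ℝ := (2 * (j' : ℝ) + 1) * (m : ℝ) - (2 * (j : ℝ) + 1) * (m' : ℝ) with hc
  set N : ℕ := m + m' + 1 with hN
  set F : ℕ → ℕ → ((ℕ × ℕ) →₀ ℝ) := fun i i' =>
    ((x ^ i * (m.choose i : ℝ)) * (x ^ i' * (m'.choose i' : ℝ)) *
      ((2 * ((j' + i' * k : ℕ) : ℝ) + 1) * ((m - i : ℕ) : ℝ)
        - (2 * ((j + i * k : ℕ) : ℝ) + 1) * ((m' - i' : ℕ) : ℝ))) •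
      Finsupp.single ((m - i) + (m' - i') - 1, (j + i * k) + (j' + i' * k)) (1 : ℝ) with hF
  have hL : br (Gelt k m j t) (Gelt k m' j' t)
      = ∑ i ∈ Finset.range N, ∑ i' ∈ Finset.range N, F i i' := by
    rw [gelt_eq k m j t (N := N) (by omega), gelt_eq k m' j' t (N := N) (by omega),
      br_sum_left]
    apply Finset.sum_congr rfl
    intro i _
    rw [br_sum_right]
    apply Finset.sum_congr rfl
    intro i' _
    exact br_single_single _ _ _ _
  have hF0 : ∀ i i', N ≤ i ∨ N ≤ i' → F i i' = 0 := by
    intro i i' h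
    rcases h with h | h
    · have : m < i := by omega
      simp [hF, Nat.choose_eq_zero_of_lt this]
    · have : m' < i' := by omega
      simp [hF, Nat.choose_eq_zero_of_lt this]
  rw [hL, aux_diag N F hF0]
  have hinner : ∀ n ∈ Finset.range (2*N), ∑ i ∈ Finset.range (n+1), F i (n - i)
      = (c * (x ^ n * (((m + m' - 1).choose n : ℕ) : ℝ))) •
          Finsupp.single (m + m' - 1 - n, (j + j') + n * k) (1 : ℝ) := by
    intro n _
    have hterm : ∀ i ∈ Finset.range (n+1), F i (n - i)
        = (x ^ n * ((m.choose i : ℝ) * (m'.choose (n-i) : ℝ) *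
            ((2*(j':ℝ) + 2*((n-i : ℕ):ℝ)*(k:ℝ) + 1) * ((m - i : ℕ):ℝ)
              - (2*(j:ℝ) + 2*(i:ℝ)*(k:ℝ) + 1) * ((m' - (n-i) : ℕ):ℝ)))) •
            Finsupp.single (m + m' - 1 - n, (j + j') + n * k) (1 : ℝ) := by
      intro i hi
      have hin : i ≤ n := by have := Finset.mem_range.mp hi; omega
      by_cases hcase : i ≤ m ∧ n - i ≤ m'
      · obtain ⟨h1, h2⟩ := hcase
        have hidx1 : (m - i) + (m' - (n - i)) - 1 = m + m' - 1 - n := by omega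
        have hik : i * k + (n - i) * k = n * k := by
          rw [← Nat.add_mul]; congr 1; omega
        have hidx2 : (j + i * k) + (j' + (n - i) * k) = (j + j') + n * k := by
          calc (j + i * k) + (j' + (n - i) * k) = (j + j') + (i * k + (n - i) * k) := by ring
          _ = (j + j') + n * k := by rw [hik]
        simp only [hF]
        rw [hidx1, hidx2]
        congr 1
        have hpow : x ^ i * x ^ (n - i) = x ^ n := by
          rw [← pow_add]; congr 1; omega
        push_cast
        rw [← hpow]
        ring
      · have : m < i ∨ m' < n - i := by omega
        rcases this with h | h
        · simp [hF, Nat.choose_eq_zero_of_lt h]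
        · simp [hF, Nat.choose_eq_zero_of_lt h]
    rw [Finset.sum_congr rfl hterm, ← Finset.sum_smul]
    congr 1
    rw [← Finset.mul_sum, aux_star k j j' m m' n]
    ring
  rw [Finset.sum_congr rfl hinner]
  rw [gelt_eq k (m + m' - 1) (j + j') t (N := 2*N) (by omega), Finset.smul_sum]
  apply Finset.sum_congr rfl
  intro n _
  rw [Finsupp.smul_single', Finsupp.smul_single', mul_one]
end

section
/- If u(x,t) is a smooth solution of the CDIS equation on a strip ℝ × (a,b) with u(·,t) square-integrable and decaying (together with derivatives up to order 2) at spatial infinity for each t, then the integral ∫_ℝ u(x,t)² dx is independent of t. -/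
open MeasureTheory Filter

section Helpers

open Function

lemma slice_x_diff {u : ℝ → ℝ → ℝ} (hu : ContDiff ℝ (⊤ : ℕ∞) (uncurry u)) (t x : ℝ) :
    DifferentiableAt ℝ (fun y => u y t) x := by
  have : (fun y => u y t) = uncurry u ∘ (fun y => (y, t)) := rfl
  rw [this]
  exact ((hu.differentiable (by simp)) (x, t)).comp x
    ((differentiable_id.prodMk (differentiable_const t)) x)

lemma slice_t_diff {u : ℝ → ℝ → ℝ} (hu : ContDiff ℝ (⊤ : ℕ∞) (uncurry u)) (x t : ℝ) :
    DifferentiableAt ℝ (fun s => u x s) t := by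
  have : (fun s => u x s) = uncurry u ∘ (fun s => (x, s)) := rfl
  rw [this]
  exact ((hu.differentiable (by simp)) (x, t)).comp t
    ((differentiable_const x).prodMk differentiable_id t)

lemma hasDerivAt_slice_x {u : ℝ → ℝ → ℝ} (hu : ContDiff ℝ (⊤ : ℕ∞) (uncurry u)) (t x : ℝ) :
    HasDerivAt (fun y => u y t) (dx u x t) x := (slice_x_diff hu t x).hasDerivAt

lemma hasDerivAt_slice_t {u : ℝ → ℝ → ℝ} (hu : ContDiff ℝ (⊤ : ℕ∞) (uncurry u)) (x t : ℝ) :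
    HasDerivAt (fun s => u x s) (dt u x t) t := (slice_t_diff hu x t).hasDerivAt

lemma slice_x_cont {u : ℝ → ℝ → ℝ} (hu : ContDiff ℝ (⊤ : ℕ∞) (uncurry u)) (t : ℝ) :
    Continuous fun x => u x t :=
  hu.continuous.comp (continuous_id.prodMk continuous_const)

lemma dx_eq_fderiv {u : ℝ → ℝ → ℝ} (hu : ContDiff ℝ (⊤ : ℕ∞) (uncurry u)) (x t : ℝ) :
    dx u x t = fderiv ℝ (uncurry u) (x, t) (1, 0) := by
  have h1 : HasDerivAt (fun y : ℝ => ((y, t) : ℝ × ℝ)) (1, 0) x :=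
    (hasDerivAt_id x).prodMk (hasDerivAt_const x t)
  have h2 : HasFDerivAt (uncurry u) (fderiv ℝ (uncurry u) (x, t)) (x, t) :=
    ((hu.differentiable (by simp)) (x, t)).hasFDerivAt
  have := h2.comp_hasDerivAt x h1
  exact this.deriv ▸ rfl

lemma dt_eq_fderiv {u : ℝ → ℝ → ℝ} (hu : ContDiff ℝ (⊤ : ℕ∞) (uncurry u)) (x t : ℝ) :
    dt u x t = fderiv ℝ (uncurry u) (x, t) (0, 1) := by
  have h1 : HasDerivAt (fun s : ℝ => ((x, s) : ℝ × ℝ)) (0, 1) t :=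
    (hasDerivAt_const t x).prodMk (hasDerivAt_id t)
  have h2 : HasFDerivAt (uncurry u) (fderiv ℝ (uncurry u) (x, t)) (x, t) :=
    ((hu.differentiable (by simp)) (x, t)).hasFDerivAt
  have := h2.comp_hasDerivAt t h1
  exact this.deriv ▸ rfl

lemma dx_smooth {u : ℝ → ℝ → ℝ} (hu : ContDiff ℝ (⊤ : ℕ∞) (uncurry u)) :
    ContDiff ℝ (⊤ : ℕ∞) (uncurry (dx u)) := by
  have : uncurry (dx u) = fun p : ℝ × ℝ => fderiv ℝ (uncurry u) p (1, 0) := by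
    ext ⟨x, t⟩; exact dx_eq_fderiv hu x t
  rw [this]
  exact (hu.fderiv_right (by exact_mod_cast (le_top : (⊤ : ℕ∞) + 1 ≤ ⊤))).clm_apply contDiff_const

lemma dt_smooth {u : ℝ → ℝ → ℝ} (hu : ContDiff ℝ (⊤ : ℕ∞) (uncurry u)) :
    ContDiff ℝ (⊤ : ℕ∞) (uncurry (dt u)) := by
  have : uncurry (dt u) = fun p : ℝ × ℝ => fderiv ℝ (uncurry u) p (0, 1) := by
    ext ⟨x, t⟩; exact dt_eq_fderiv hu x t
  rw [this]
  exact (hu.fderiv_right (by exact_mod_cast (le_top : (⊤ : ℕ∞) + 1 ≤ ⊤))).clm_apply contDiff_const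

end Helpers

/-- for a smooth solution u of the CDIS equation on the strip
ℝ × (a,b) with u(·,t)² integrable, with u, u_x, u_xx decaying at spatial infinity
for each t, and with a decay fast enough to dominate ∂_t(u²) uniformly on compact
t-intervals, the integral ∫_ℝ u(x,t)² dx is independent of t. -/
theorem cdis_L2_conserved (a b : ℝ) (u : ℝ → ℝ → ℝ)
    (hu : ContDiff ℝ (⊤ : ℕ∞) (Function.uncurry u))
    (hcdis : ∀ x : ℝ, ∀ t ∈ Set.Ioo a b, dt u x t =
      dx (dx (dx u)) x t + 3 * (u x t) ^ 2 * dx (dx u) x t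
        + 9 * u x t * (dx u x t) ^ 2 + 3 * (u x t) ^ 4 * dx u x t)
    (hint : ∀ t ∈ Set.Ioo a b, Integrable (fun x => (u x t) ^ 2))
    (hdecay : ∀ t ∈ Set.Ioo a b,
      Tendsto (fun x => u x t) atTop (nhds 0) ∧ Tendsto (fun x => u x t) atBot (nhds 0) ∧
      Tendsto (fun x => dx u x t) atTop (nhds 0) ∧ Tendsto (fun x => dx u x t) atBot (nhds 0) ∧
      Tendsto (fun x => dx (dx u) x t) atTop (nhds 0) ∧
      Tendsto (fun x => dx (dx u) x t) atBot (nhds 0))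
    (hdom : ∀ K : Set ℝ, IsCompact K → K ⊆ Set.Ioo a b →
      ∃ g : ℝ → ℝ, Integrable g ∧
        ∀ t ∈ K, ∀ x : ℝ, |dt (fun x t => (u x t) ^ 2) x t| ≤ g x) :
    ∀ t₁ ∈ Set.Ioo a b, ∀ t₂ ∈ Set.Ioo a b,
      (∫ x : ℝ, (u x t₁) ^ 2) = ∫ x : ℝ, (u x t₂) ^ 2 := by
  have hu2 : ContDiff ℝ (⊤ : ℕ∞) (Function.uncurry fun x t => u x t ^ 2) := by
    have : (Function.uncurry fun x t => u x t ^ 2) =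
        fun p : ℝ × ℝ => Function.uncurry u p ^ 2 := rfl
    rw [this]; exact hu.pow 2
  have hux := dx_smooth hu
  have huxx := dx_smooth hux
  -- ∂ₜ(u²) = 2 u uₜ
  have hdtu2 : ∀ x t : ℝ, dt (fun x t => u x t ^ 2) x t = 2 * u x t * dt u x t := by
    intro x t
    have h := (hasDerivAt_slice_t hu x t).pow 2
    have : dt (fun x t => u x t ^ 2) x t = deriv (fun s => u x s ^ 2) t := rfl
    rw [this, show (fun s => u x s ^ 2) = (fun s => u x s) ^ 2 from rfl, h.deriv]
    push_cast; ring
  -- the derivative of the L² mass vanishes on (a,b)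
  have key : ∀ t₀ ∈ Set.Ioo a b, HasDerivAt (fun t => ∫ x : ℝ, u x t ^ 2) 0 t₀ := by
    intro t₀ ht₀
    obtain ⟨ht₀a, ht₀b⟩ := ht₀
    set ε : ℝ := min (t₀ - a) (b - t₀) / 2 with hεdef
    have hεpos : 0 < ε := by
      apply div_pos _ two_pos
      exact lt_min (by linarith) (by linarith)
    have hK : Set.Icc (t₀ - ε) (t₀ + ε) ⊆ Set.Ioo a b := by
      intro s hs
      have h1 : ε ≤ (t₀ - a) / 2 := by
        have := min_le_left (t₀ - a) (b - t₀); rw [hεdef]; linarith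
      have h2 : ε ≤ (b - t₀) / 2 := by
        have := min_le_right (t₀ - a) (b - t₀); rw [hεdef]; linarith
      exact ⟨by linarith [hs.1], by linarith [hs.2]⟩
    obtain ⟨g, hg, hgb⟩ := hdom _ isCompact_Icc hK
    have hball : Metric.ball t₀ ε ⊆ Set.Icc (t₀ - ε) (t₀ + ε) := by
      intro s hs
      rw [Real.ball_eq_Ioo] at hs
      exact ⟨hs.1.le, hs.2.le⟩
    have hdt2s := dt_smooth hu2
    have hcontF' : ∀ t : ℝ, Continuous fun x => dt (fun x t => u x t ^ 2) x t :=
      fun t => slice_x_cont hdt2s t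
    have ht₀mem : t₀ ∈ Set.Icc (t₀ - ε) (t₀ + ε) := ⟨by linarith, by linarith⟩
    have H := hasDerivAt_integral_of_dominated_loc_of_deriv_le (μ := volume)
      (F := fun t x => u x t ^ 2) (F' := fun t x => dt (fun x t => u x t ^ 2) x t)
      (bound := g) (Metric.ball_mem_nhds t₀ hεpos)
      (Eventually.of_forall fun t =>
        ((slice_x_cont hu t).pow 2).aestronglyMeasurable)
      (hint t₀ ⟨ht₀a, ht₀b⟩)
      ((hcontF' t₀).aestronglyMeasurable)
      (MeasureTheory.ae_of_all _ fun x t ht => by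
        rw [Real.norm_eq_abs]
        exact hgb t (hball ht) x)
      hg
      (MeasureTheory.ae_of_all _ fun x t _ => hasDerivAt_slice_t hu2 x t)
    -- the integral of the spatial divergence vanishes
    have hzero : (∫ x : ℝ, dt (fun x t => u x t ^ 2) x t₀) = 0 := by
      set G : ℝ → ℝ := fun x => 2 * u x t₀ * dx (dx u) x t₀ + 6 * u x t₀ ^ 3 * dx u x t₀
          + u x t₀ ^ 6 - dx u x t₀ ^ 2 with hGdef
      have hGderiv : ∀ x : ℝ, HasDerivAt G (dt (fun x t => u x t ^ 2) x t₀) x := by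
        intro x
        have h0 := hasDerivAt_slice_x hu t₀ x
        have h1 := hasDerivAt_slice_x hux t₀ x
        have h2 := hasDerivAt_slice_x huxx t₀ x
        have T := ((((h0.const_mul (2 : ℝ)).mul h2).add
          (((h0.pow 3).const_mul (6 : ℝ)).mul h1)).add (h0.pow 6)).sub (h1.pow 2)
        refine HasDerivAt.congr_deriv T ?_
        rw [hdtu2, hcdis x t₀ ⟨ht₀a, ht₀b⟩]
        push_cast [Pi.pow_apply]; ring
      have hGint : Integrable fun x => dt (fun x t => u x t ^ 2) x t₀ := by
        refine (hg.mono' ((hcontF' t₀).aestronglyMeasurable)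
          (MeasureTheory.ae_of_all _ fun x => ?_))
        rw [Real.norm_eq_abs]
        exact hgb t₀ ht₀mem x
      obtain ⟨p1, p2, p3, p4, p5, p6⟩ := hdecay t₀ ⟨ht₀a, ht₀b⟩
      have hGtop : Tendsto G atTop (nhds 0) := by
        have := ((((p1.const_mul (2 : ℝ)).mul p5).add
          (((p1.pow 3).const_mul (6 : ℝ)).mul p3)).add (p1.pow 6)).sub (p3.pow 2)
        simpa using this
      have hGbot : Tendsto G atBot (nhds 0) := by
        have := ((((p2.const_mul (2 : ℝ)).mul p6).add
          (((p2.pow 3).const_mul (6 : ℝ)).mul p4)).add (p2.pow 6)).sub (p4.pow 2)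
        simpa using this
      have := MeasureTheory.integral_of_hasDerivAt_of_tendsto hGderiv hGint hGbot hGtop
      simpa using this
    have := H.2
    rwa [hzero] at this
  -- conclude constancy
  have main : ∀ s₁ ∈ Set.Ioo a b, ∀ s₂ ∈ Set.Ioo a b, s₁ ≤ s₂ →
      (∫ x : ℝ, u x s₁ ^ 2) = ∫ x : ℝ, u x s₂ ^ 2 := by
    intro s₁ hs₁ s₂ hs₂ h12
    have hsub : Set.Icc s₁ s₂ ⊆ Set.Ioo a b := fun x hx =>
      ⟨lt_of_lt_of_le hs₁.1 hx.1, lt_of_le_of_lt hx.2 hs₂.2⟩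
    have := constant_of_has_deriv_right_zero
      (f := fun t => ∫ x : ℝ, u x t ^ 2) (a := s₁) (b := s₂)
      (fun x hx => (key x (hsub hx)).continuousAt.continuousWithinAt)
      (fun x hx => (key x (hsub ⟨hx.1, hx.2.le⟩)).hasDerivWithinAt)
    exact (this s₂ ⟨h12, le_rfl⟩).symm
  intro t₁ ht₁ t₂ ht₂
  rcases le_total t₁ t₂ with h | h
  · exact main t₁ ht₁ t₂ ht₂ h
  · exact (main t₂ ht₂ t₁ ht₁ h).symm
end
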